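/- Let A be a commutative ring, I a set, R = A[(X_i)_{i∈I}] the polynomial ring, G a commutative group, ψ : ℤ^(⊕I) → G a surjective group homomorphism, H ≤ G a subgroup of finite index, and S = R_(H). Let 𝔞, 𝔟 ⊆ R be finitely generated monomial ideals. If ⌊𝔞⌋_H = ⌊𝔟⌋_H, then Γ_{𝔞_(H)} = Γ_{𝔟_(H)}, i.e., Γ_{𝔞_(H)}(M) = Γ_{𝔟_(H)}(M) for every S-module M. (Proposition 2.40 b).) -/

import Mathlib

set_option synthInstance.maxHeartbeats 1000000
set_option maxHeartbeats 1000000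

open MvPolynomial

/-- `suppInd μ` is the characteristic function of the support of `μ`,
so that `X^(suppInd μ) = ∏_{i : μ i > 0} X i`. -/
noncomputable def suppInd {I : Type v} (μ : I →₀ ℕ) : I →₀ ℕ :=
  μ.mapRange (fun n => if n = 0 then 0 else 1) (by simp)

/-- The canonical embedding `ℕ^(⊕I) → ℤ^(⊕I)`. -/
noncomputable def natToInt {I : Type v} (μ : I →₀ ℕ) : I →₀ ℤ :=
  Finsupp.mapRange (Nat.cast : ℕ → ℤ) Nat.cast_zero μ

/-- A monomial ideal of `A[(X_i)_{i ∈ I}]` is an ideal generated by a set of monomials. -/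
def IsMonomialIdeal {A : Type u} [CommRing A] {I : Type v}
    (𝔞 : Ideal (MvPolynomial I A)) : Prop :=
  ∃ E : Set (I →₀ ℕ), 𝔞 = Ideal.span ((fun μ => monomial μ (1 : A)) '' E)

/-- `⌊𝔞⌋` is the ideal generated by the monomials `X^(suppInd μ)` for all monomials
`X^μ ∈ 𝔞`. -/
noncomputable def mvFloor {A : Type u} [CommRing A] {I : Type v}
    (𝔞 : Ideal (MvPolynomial I A)) : Ideal (MvPolynomial I A) :=
  Ideal.span {f | ∃ μ : I →₀ ℕ, monomial μ (1 : A) ∈ 𝔞 ∧ f = monomial (suppInd μ) (1 : A)}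

/-- The degree restriction `S = R_(H)` of `R = A[(X_i)_{i ∈ I}]` (graded via
`ψ : ℤ^(⊕I) → G`) to a subgroup `H ≤ G`: the `A`-subalgebra of `R` generated by the
monomials `X^μ` whose degree `ψ(μ)` lies in `H`. -/
noncomputable def degRestrict (A : Type u) [CommRing A] {I : Type v} {G : Type w} [AddCommGroup G]
    (ψ : (I →₀ ℤ) →+ G) (H : AddSubgroup G) : Subalgebra A (MvPolynomial I A) :=
  Algebra.adjoin A {f | ∃ μ : I →₀ ℕ, ψ (natToInt μ) ∈ H ∧ f = monomial μ (1 : A)}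

/-- The degree restriction `𝔠_(H) = 𝔠 ∩ S` of an ideal `𝔠` of `R`, as an ideal of
`S = R_(H)`. -/
noncomputable def idealRestrict {A : Type u} [CommRing A] {I : Type v} {G : Type w} [AddCommGroup G]
    (ψ : (I →₀ ℤ) →+ G) (H : AddSubgroup G) (𝔠 : Ideal (MvPolynomial I A)) :
    Ideal (degRestrict A ψ H) :=
  Ideal.comap (degRestrict A ψ H).val 𝔠

/-- `E(𝔞)`: the set of minimal elements of `{μ ∈ ℕ^(⊕I) | X^μ ∈ 𝔞}` with respect to
the componentwise order. -/
def Emin {A : Type u} [CommRing A] {I : Type v} (𝔞 : Ideal (MvPolynomial I A)) :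
    Set (I →₀ ℕ) :=
  {μ | monomial μ (1 : A) ∈ 𝔞 ∧ ∀ ν : I →₀ ℕ, monomial ν (1 : A) ∈ 𝔞 → ν ≤ μ → ν = μ}

/-- `m_μ`: the least `m ∈ ℕ` such that `X^(m • suppInd μ) ∈ 𝔞_(H) = 𝔞 ∩ S`. -/
noncomputable def mdeg {A : Type u} [CommRing A] {I : Type v} {G : Type w} [AddCommGroup G]
    (ψ : (I →₀ ℤ) →+ G) (H : AddSubgroup G) (𝔞 : Ideal (MvPolynomial I A))
    (μ : I →₀ ℕ) : ℕ :=
  sInf {m : ℕ | monomial (m • suppInd μ) (1 : A) ∈ 𝔞 ∧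
    monomial (m • suppInd μ) (1 : A) ∈ degRestrict A ψ H}

/-- `⌊𝔞⌋_H`: the ideal of `S = R_(H)` generated by the monomials `X^(m_μ • suppInd μ)`
for `μ ∈ E(𝔞)`. -/
noncomputable def floorH {A : Type u} [CommRing A] {I : Type v} {G : Type w} [AddCommGroup G]
    (ψ : (I →₀ ℤ) →+ G) (H : AddSubgroup G) (𝔞 : Ideal (MvPolynomial I A)) :
    Ideal (degRestrict A ψ H) :=
  Ideal.span {s | ∃ μ ∈ Emin 𝔞,
    (s : MvPolynomial I A) = monomial (mdeg ψ H 𝔞 μ • suppInd μ) (1 : A)}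


/-!
Torsion with respect to an ideal only depends on the ideal up to powers, so it suffices to show
`𝔞_(H)^k ⊆ ⌊𝔞⌋_H ⊆ 𝔞_(H)` for some `k`: then `⌊𝔞⌋_H = ⌊𝔟⌋_H` gives
`𝔞_(H)^k ⊆ ⌊𝔟⌋_H ⊆ 𝔟_(H)` and symmetrically.

The inclusion `⌊𝔞⌋_H ⊆ 𝔞_(H)` holds by construction of `m_μ`. Conversely, `𝔞_(H)` is spanned by
the monomials of `𝔞` lying in `S`, so `𝔞_(H)^k` is spanned by products of `k` of them. Each factor
is a multiple of `X^μ` for some `μ` in the finite set `E(𝔞)`; for `k > ∑ m_μ` the pigeonhole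
principle yields a `μ` dividing `m_μ` of the factors, so the product is a multiple of
`X^(m_μ • sq(μ))`, and the cofactor lies in `S` because its degree is a difference of degrees in `H`.
-/

theorem Ideal.exists_pow_le_of_exists_pow_le {R : Type*} [CommSemiring R] {I J K : Ideal R}
    (hJI : ∃ k, J ^ k ≤ I) (hIK : ∃ n, I ^ n ≤ K) : ∃ n, J ^ n ≤ K := by
  obtain ⟨k, hk⟩ := hJI
  obtain ⟨n, hn⟩ := hIK
  exact ⟨k * n, by rw [pow_mul]; exact (Ideal.pow_right_mono hk n).trans hn⟩

namespace Finset

theorem exists_nsmul_le_sum {M ι : Type*} [AddCommMonoid M] [PartialOrder M]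
    [IsOrderedAddMonoid M] [CanonicallyOrderedAdd M] [Fintype ι]
    {T : Finset M} (m : M → ℕ) (hT : ∑ μ ∈ T, m μ < Fintype.card ι) {ρ : ι → M}
    (hρ : ∀ i, ∃ μ ∈ T, μ ≤ ρ i) : ∃ μ ∈ T, m μ • μ ≤ ∑ i, ρ i := by
  classical
  choose g hgT hgρ using hρ
  rw [← card_univ, card_eq_sum_card_fiberwise (fun i _ => hgT i)] at hT
  obtain ⟨μ, hμT, hμ⟩ := exists_lt_of_sum_lt hT
  refine ⟨μ, hμT, ?_⟩
  calc m μ • μ ≤ #{i | g i = μ} • μ := nsmul_le_nsmul_left zero_le hμ.le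
    _ = ∑ i with g i = μ, μ := (sum_const μ).symm
    _ ≤ ∑ i with g i = μ, ρ i := sum_le_sum fun i hi => (mem_filter.1 hi).2 ▸ hgρ i
    _ ≤ ∑ i, ρ i := sum_le_sum_of_subset (filter_subset _ _)

end Finset

theorem suppInd_apply {I : Type v} (μ : I →₀ ℕ) (i : I) :
    suppInd μ i = if μ i = 0 then 0 else 1 :=
  Finsupp.mapRange_apply

theorem suppInd_le {I : Type v} (μ : I →₀ ℕ) : suppInd μ ≤ μ := fun i => by
  rw [suppInd_apply]
  split <;> omega

theorem le_nsmul_suppInd {I : Type v} {μ : I →₀ ℕ} {n : ℕ} (h : ∀ i, μ i ≤ n) :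
    μ ≤ n • suppInd μ := fun i => by
  rw [Finsupp.smul_apply, suppInd_apply]
  split <;> simp_all

namespace MvPolynomial

variable {A : Type u} [CommRing A] {I : Type v}

theorem monomial_one_mem_of_le {𝔞 : Ideal (MvPolynomial I A)} {μ ν : I →₀ ℕ}
    (hν : monomial ν (1 : A) ∈ 𝔞) (hle : ν ≤ μ) : monomial μ (1 : A) ∈ 𝔞 := by
  rw [← tsub_add_cancel_of_le hle, ← one_mul (1 : A), ← monomial_mul]
  exact 𝔞.mul_mem_left _ hν

theorem IsMonomialIdeal.monomial_one_mem_of_mem_support {𝔞 : Ideal (MvPolynomial I A)}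
    (h𝔞 : IsMonomialIdeal 𝔞) {f : MvPolynomial I A} (hf : f ∈ 𝔞) {ρ : I →₀ ℕ}
    (hρ : ρ ∈ f.support) : monomial ρ (1 : A) ∈ 𝔞 := by
  obtain ⟨E, rfl⟩ := h𝔞
  obtain ⟨ν, hνE, hνρ⟩ := mem_ideal_span_monomial_image.1 hf ρ hρ
  exact monomial_one_mem_of_le (Ideal.subset_span ⟨ν, hνE, rfl⟩) hνρ

theorem exists_mem_Emin_le {𝔞 : Ideal (MvPolynomial I A)} {ρ : I →₀ ℕ}
    (hρ : monomial ρ (1 : A) ∈ 𝔞) : ∃ μ ∈ Emin 𝔞, μ ≤ ρ := by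
  obtain ⟨μ, hμρ, hμ⟩ := exists_minimal_le_of_wellFoundedLT (monomial · (1 : A) ∈ 𝔞) ρ hρ
  exact ⟨μ, ⟨hμ.prop, fun ν hν hνμ => le_antisymm hνμ (hμ.le_of_le hν hνμ)⟩, hμρ⟩

theorem IsMonomialIdeal.Emin_finite [Nontrivial A] {𝔞 : Ideal (MvPolynomial I A)}
    (h𝔞 : IsMonomialIdeal 𝔞) (hfg : 𝔞.FG) : (Emin 𝔞).Finite := by
  classical
  obtain ⟨gens, hgens⟩ := hfg
  set F : Finset (I →₀ ℕ) := gens.biUnion support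
  have h𝔞F : 𝔞 ≤ Ideal.span ((monomial · (1 : A)) '' F) := by
    rw [← hgens, Ideal.span_le]
    intro f hf
    exact mem_ideal_span_monomial_image.2 fun ρ hρ =>
      ⟨ρ, Finset.mem_coe.2 (Finset.mem_biUnion.2 ⟨f, hf, hρ⟩), le_rfl⟩
  refine F.finite_toSet.subset fun μ hμ => ?_
  obtain ⟨ν, hνF, hνμ⟩ := mem_ideal_span_monomial_image.1 (h𝔞F hμ.1) μ (by simp)
  obtain ⟨f, hf, hνf⟩ := Finset.mem_biUnion.1 hνF
  have hν𝔞 := h𝔞.monomial_one_mem_of_mem_support (hgens ▸ Ideal.subset_span hf) hνf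
  rwa [← hμ.2 ν hν𝔞 hνμ]

end MvPolynomial

section DegreeRestriction

variable {A : Type u} [CommRing A] {I : Type v} {G : Type w} [AddCommGroup G]
  (ψ : (I →₀ ℤ) →+ G) (H : AddSubgroup G)

/-- The exponents of the monomials of `R_(H)`. -/
noncomputable def degMonoid : AddSubmonoid (I →₀ ℕ) :=
  H.toAddSubmonoid.comap (ψ.comp (Finsupp.mapRange.addMonoidHom (Nat.castAddMonoidHom ℤ)))

variable {ψ H}

theorem tsub_mem_degMonoid {μ ν : I →₀ ℕ} (hμ : μ ∈ degMonoid ψ H) (hν : ν ∈ degMonoid ψ H)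
    (hνμ : ν ≤ μ) : μ - ν ∈ degMonoid ψ H := by
  rw [← tsub_add_cancel_of_le hνμ, degMonoid, AddSubmonoid.mem_comap, map_add] at hμ
  exact (H.add_mem_cancel_right hν).1 hμ

theorem index_nsmul_mem_degMonoid (μ : I →₀ ℕ) : H.index • μ ∈ degMonoid ψ H := by
  rw [degMonoid, AddSubmonoid.mem_comap, map_nsmul]
  exact H.nsmul_index_mem _

theorem degRestrict_toSubmodule :
    Subalgebra.toSubmodule (degRestrict A ψ H) = restrictSupport A (degMonoid ψ H) := by
  refine le_antisymm ?_ ?_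
  · have hmul : ∀ f g : MvPolynomial I A, f ∈ restrictSupport A (degMonoid ψ H) →
        g ∈ restrictSupport A (degMonoid ψ H) → f * g ∈ restrictSupport A (degMonoid ψ H) := by
      intro f g hf hg
      have hfg := restrictSupport_add (R := A) (degMonoid ψ H : Set (I →₀ ℕ)) (degMonoid ψ H) ▸
        Submodule.mul_mem_mul hf hg
      refine restrictSupport_mono A ?_ hfg
      rintro _ ⟨μ, hμ, ν, hν, rfl⟩
      exact (degMonoid ψ H).add_mem hμ hν
    have hone : (1 : MvPolynomial I A) ∈ restrictSupport A (degMonoid ψ H) :=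
      (monomial_mem_restrictSupport A).2 (Or.inl (degMonoid ψ H).zero_mem)
    refine Subalgebra.toSubmodule.monotone
      (Algebra.adjoin_le (S := (restrictSupport A _).toSubalgebra hone hmul) ?_)
    rintro _ ⟨μ, hμ, rfl⟩
    exact (monomial_mem_restrictSupport A).2 (Or.inl hμ)
  · rw [restrictSupport_eq_span, Submodule.span_le]
    rintro _ ⟨μ, hμ, rfl⟩
    exact Algebra.subset_adjoin ⟨μ, hμ, rfl⟩

theorem mem_degRestrict_iff {f : MvPolynomial I A} :
    f ∈ degRestrict A ψ H ↔ ↑f.support ⊆ (degMonoid ψ H : Set (I →₀ ℕ)) := by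
  rw [← Subalgebra.mem_toSubmodule, degRestrict_toSubmodule, mem_restrictSupport_iff]

theorem monomial_one_mem_degRestrict {μ : I →₀ ℕ} (hμ : μ ∈ degMonoid ψ H) :
    monomial μ (1 : A) ∈ degRestrict A ψ H :=
  Algebra.subset_adjoin ⟨μ, hμ, rfl⟩

theorem mem_degMonoid_of_monomial_one_mem [Nontrivial A] {μ : I →₀ ℕ}
    (hμ : monomial μ (1 : A) ∈ degRestrict A ψ H) : μ ∈ degMonoid ψ H :=
  mem_degRestrict_iff.1 hμ (by classical simp)

end DegreeRestriction

section RestrictedIdeals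

variable {A : Type u} [CommRing A] {I : Type v} {G : Type w} [AddCommGroup G]
  {ψ : (I →₀ ℤ) →+ G} {H : AddSubgroup G}

theorem mem_of_forall_monomial_mem {𝔡 : Ideal (degRestrict A ψ H)} {s : degRestrict A ψ H}
    (hs : ∀ ρ ∈ (s : MvPolynomial I A).support, ∀ y : degRestrict A ψ H,
      (y : MvPolynomial I A) = monomial ρ 1 → y ∈ 𝔡) : s ∈ 𝔡 := by
  have hsupp : ↑(s : MvPolynomial I A).support ⊆ (degMonoid ψ H : Set (I →₀ ℕ)) :=
    mem_degRestrict_iff.1 s.2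
  have hs' : (s : MvPolynomial I A) ∈
      (𝔡.restrictScalars A).map (degRestrict A ψ H).val.toLinearMap := by
    have hspan : (s : MvPolynomial I A) ∈ restrictSupport A ↑(s : MvPolynomial I A).support :=
      (mem_restrictSupport_iff A).2 subset_rfl
    rw [restrictSupport_eq_span] at hspan
    refine Submodule.span_le.2 ?_ hspan
    rintro _ ⟨ρ, hρ, rfl⟩
    exact ⟨⟨monomial ρ 1, monomial_one_mem_degRestrict (hsupp hρ)⟩, hs ρ hρ _ rfl, rfl⟩
  obtain ⟨t, ht, hts⟩ := hs'
  rwa [← Subtype.ext hts]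

theorem dvd_of_monomial_le [Nontrivial A] {x y : degRestrict A ψ H} {ρ τ : I →₀ ℕ}
    (hx : (x : MvPolynomial I A) = monomial ρ 1) (hy : (y : MvPolynomial I A) = monomial τ 1)
    (hτρ : τ ≤ ρ) : y ∣ x := by
  have hρ := mem_degMonoid_of_monomial_one_mem (hx ▸ x.2)
  have hτ := mem_degMonoid_of_monomial_one_mem (hy ▸ y.2)
  refine ⟨⟨monomial (ρ - τ) 1, monomial_one_mem_degRestrict (tsub_mem_degMonoid hρ hτ hτρ)⟩, ?_⟩
  apply Subtype.ext
  rw [Subalgebra.coe_mul, hx, hy, monomial_mul, one_mul, add_tsub_cancel_of_le hτρ]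

theorem idealRestrict_le_span_monomials {𝔞 : Ideal (MvPolynomial I A)}
    (h𝔞 : IsMonomialIdeal 𝔞) :
    idealRestrict ψ H 𝔞 ≤ Ideal.span {x : degRestrict A ψ H | ∃ ρ, monomial ρ (1 : A) ∈ 𝔞 ∧
      (x : MvPolynomial I A) = monomial ρ 1} := fun _ hs =>
  mem_of_forall_monomial_mem fun ρ hρ _ hy =>
    Ideal.subset_span ⟨ρ, h𝔞.monomial_one_mem_of_mem_support hs hρ, hy⟩

theorem monomial_mdeg_mem (hH : H.FiniteIndex) {𝔞 : Ideal (MvPolynomial I A)} {μ : I →₀ ℕ}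
    (hμ : monomial μ (1 : A) ∈ 𝔞) :
    monomial (mdeg ψ H 𝔞 μ • suppInd μ) (1 : A) ∈ 𝔞 ∧
      monomial (mdeg ψ H 𝔞 μ • suppInd μ) (1 : A) ∈ degRestrict A ψ H := by
  have hne : ∃ m : ℕ, monomial (m • suppInd μ) (1 : A) ∈ 𝔞 ∧
      monomial (m • suppInd μ) (1 : A) ∈ degRestrict A ψ H := by
    refine ⟨H.index * μ.degree, monomial_one_mem_of_le hμ ?_, ?_⟩
    · refine le_nsmul_suppInd fun i => (μ.le_degree i).trans ?_
      exact Nat.le_mul_of_pos_left _ (Nat.pos_of_ne_zero hH.index_ne_zero)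
    · rw [mul_nsmul']
      exact monomial_one_mem_degRestrict (index_nsmul_mem_degMonoid _)
  exact Nat.sInf_mem hne

theorem floorH_le_idealRestrict (hH : H.FiniteIndex) (𝔞 : Ideal (MvPolynomial I A)) :
    floorH ψ H 𝔞 ≤ idealRestrict ψ H 𝔞 := by
  refine Ideal.span_le.2 ?_
  rintro s ⟨μ, hμ, hs⟩
  show (s : MvPolynomial I A) ∈ 𝔞
  rw [hs]
  exact (monomial_mdeg_mem hH hμ.1).1

end RestrictedIdeals

open scoped Pointwise in
theorem exists_pow_idealRestrict_le_floorH {A : Type u} [CommRing A] {I : Type v} {G : Type w}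
    [AddCommGroup G] {ψ : (I →₀ ℤ) →+ G} {H : AddSubgroup G} (hH : H.FiniteIndex)
    {𝔞 : Ideal (MvPolynomial I A)} (h𝔞 : IsMonomialIdeal 𝔞) (hfg : 𝔞.FG) :
    ∃ k, idealRestrict ψ H 𝔞 ^ k ≤ floorH ψ H 𝔞 := by
  rcases subsingleton_or_nontrivial A with hA | hA
  · exact ⟨0, (Subsingleton.elim _ _).le⟩
  classical
  set T := (h𝔞.Emin_finite hfg).toFinset
  refine ⟨∑ μ ∈ T, mdeg ψ H 𝔞 μ + 1,
    (Ideal.pow_right_mono (idealRestrict_le_span_monomials h𝔞) _).trans ?_⟩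
  rw [Ideal.span, Submodule.span_pow, ← Ideal.span, Ideal.span_le]
  intro x hx
  obtain ⟨f, rfl⟩ := Set.mem_pow.1 hx
  choose ρ hρ𝔞 hρ using fun i => (f i).2
  have hprod : ((List.ofFn fun i => (f i : degRestrict A ψ H)).prod : MvPolynomial I A) =
      monomial (∑ i, ρ i) 1 := by
    rw [List.prod_ofFn, SubmonoidClass.coe_finsetProd, monomial_sum_one]
    exact Finset.prod_congr rfl fun i _ => hρ i
  obtain ⟨μ, hμT, hμρ⟩ := Finset.exists_nsmul_le_sum (T := T) (mdeg ψ H 𝔞) (by simp) fun i =>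
    (exists_mem_Emin_le (hρ𝔞 i)).imp fun μ ⟨hμ, hμρ⟩ => ⟨(Set.Finite.mem_toFinset _).2 hμ, hμρ⟩
  have hμ := (Set.Finite.mem_toFinset _).1 hμT
  refine Ideal.mem_of_dvd _ (dvd_of_monomial_le hprod (y := ⟨_, (monomial_mdeg_mem hH hμ.1).2⟩) rfl
    ((nsmul_le_nsmul_right (suppInd_le μ) _).trans hμρ)) (Ideal.subset_span ⟨μ, hμ, rfl⟩)

theorem torsion_restrict_eq_of_floorH_eq_general
    {A : Type u} [CommRing A] {I : Type v}
    {G : Type w} [AddCommGroup G] (ψ : (I →₀ ℤ) →+ G)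
    (H : AddSubgroup G) (hH : H.FiniteIndex)
    (𝔞 𝔟 : Ideal (MvPolynomial I A)) (h𝔞 : IsMonomialIdeal 𝔞) (h𝔟 : IsMonomialIdeal 𝔟)
    (hfg𝔞 : 𝔞.FG) (hfg𝔟 : 𝔟.FG)
    (hfl : floorH ψ H 𝔞 = floorH ψ H 𝔟) :
    ∀ (M : Type (max u v)) [AddCommGroup M] [Module (degRestrict A ψ H) M] (x : M),
      (∃ n : ℕ, (idealRestrict ψ H 𝔞) ^ n ≤ Ideal.torsionOf (degRestrict A ψ H) M x) ↔
        (∃ n : ℕ, (idealRestrict ψ H 𝔟) ^ n ≤ Ideal.torsionOf (degRestrict A ψ H) M x) := by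
  intro M _ _ x
  have h𝔞𝔟 : ∃ k, idealRestrict ψ H 𝔞 ^ k ≤ idealRestrict ψ H 𝔟 :=
    (exists_pow_idealRestrict_le_floorH hH h𝔞 hfg𝔞).imp fun _ hk =>
      hk.trans (hfl ▸ floorH_le_idealRestrict hH 𝔟)
  have h𝔟𝔞 : ∃ k, idealRestrict ψ H 𝔟 ^ k ≤ idealRestrict ψ H 𝔞 :=
    (exists_pow_idealRestrict_le_floorH hH h𝔟 hfg𝔟).imp fun _ hk =>
      hk.trans (hfl ▸ floorH_le_idealRestrict hH 𝔞)
  exact ⟨Ideal.exists_pow_le_of_exists_pow_le h𝔟𝔞, Ideal.exists_pow_le_of_exists_pow_le h𝔞𝔟⟩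

/-- (Proposition 2.40 b)): for finitely generated monomial ideals
`𝔞, 𝔟` of `R = A[(X_i)_{i ∈ I}]` and `H ≤ G` of finite index, if `⌊𝔞⌋_H = ⌊𝔟⌋_H`
then the torsion functors `Γ_{𝔞_(H)}` and `Γ_{𝔟_(H)}` over `S = R_(H)` coincide. -/
theorem torsion_restrict_eq_of_floorH_eq
    {A : Type u} [CommRing A] {I : Type v}
    {G : Type w} [AddCommGroup G] (ψ : (I →₀ ℤ) →+ G) (hψ : Function.Surjective ψ)
    (H : AddSubgroup G) (hH : H.FiniteIndex)
    (𝔞 𝔟 : Ideal (MvPolynomial I A)) (h𝔞 : IsMonomialIdeal 𝔞) (h𝔟 : IsMonomialIdeal 𝔟)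
    (hfg𝔞 : 𝔞.FG) (hfg𝔟 : 𝔟.FG)
    (hfl : floorH ψ H 𝔞 = floorH ψ H 𝔟) :
    ∀ (M : Type (max u v)) [AddCommGroup M] [Module (degRestrict A ψ H) M] (x : M),
      (∃ n : ℕ, (idealRestrict ψ H 𝔞) ^ n ≤ Ideal.torsionOf (degRestrict A ψ H) M x) ↔
        (∃ n : ℕ, (idealRestrict ψ H 𝔟) ^ n ≤ Ideal.torsionOf (degRestrict A ψ H) M x) :=
  torsion_restrict_eq_of_floorH_eq_general ψ H hH 𝔞 𝔟 h𝔞 h𝔟 hfg𝔞 hfg𝔟 hfl
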